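/- Let G be a finite simple graph with a nonempty vertex set V, and for a nonempty vertex set S let ρ(S) = 2·e(S)/|S| be the average degree of the subgraph induced by S. Let δ > 0, and consider the greedy peeling sequence V = S₀ ⊋ S₁ ⊋ ⋯ ⊋ S_{|V|-1}, where each S_{j+1} is obtained from S_j by removing a vertex of minimum degree in the subgraph induced by S_j. If ρ(S_j) < δ/2 for every index j in the peeling sequence, then ρ(S) < δ for every nonempty vertex subset S ⊆ V; that is, G contains no induced subgraph of density at least δ. -/

import Mathlib

/-!
A set of density at least `δ` contains a nonempty core `B` in which every vertex has degree at
least `δ/2`: take a smallest nonempty set `B` with `δ·|B| ≤ 2e(B)`; deleting a vertex of degree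
below `δ/2` would give a smaller one. Greedy peeling never deletes a vertex of `B`, because such a
vertex has degree at least `δ/2` in the current set `S_j`, while the minimum degree of `S_j` is at
most `ρ(S_j) < δ/2`. So `B` survives to the one-vertex set `S_{|V|-1}`, hence equals it, and yet
`ρ(B) ≥ δ/2 > ρ(S_{|V|-1})`.
-/

open Finset

/-- Twice the number of edges of `G` with both endpoints in `S`,
i.e. the number of *ordered* adjacent pairs inside `S`. -/
def twiceEdgeCount {V : Type*} [DecidableEq V] (G : SimpleGraph V)
    [DecidableRel G.Adj] (S : Finset V) : ℕ :=
  ((S ×ˢ S).filter fun p => G.Adj p.1 p.2).card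

/-- The density `ρ(S) = 2·e(S)/|S|` of the subgraph of `G` induced by `S`:
the average degree of the induced subgraph. -/
noncomputable def density {V : Type*} [DecidableEq V] (G : SimpleGraph V)
    [DecidableRel G.Adj] (S : Finset V) : ℝ :=
  (twiceEdgeCount G S : ℝ) / (S.card : ℝ)

/-- The degree of `v` in the subgraph of `G` induced by `S`. -/
def inducedDegree {V : Type*} [DecidableEq V] (G : SimpleGraph V)
    [DecidableRel G.Adj] (S : Finset V) (v : V) : ℕ :=
  (S.filter fun u => G.Adj v u).card

section GreedyPeeling

variable {V : Type*} [DecidableEq V] (G : SimpleGraph V) [DecidableRel G.Adj]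

def IsGreedyPeelingStep (T T' : Finset V) : Prop :=
  ∃ v ∈ T, (∀ u ∈ T, inducedDegree G T v ≤ inducedDegree G T u) ∧ T' = T.erase v

lemma inducedDegree_eq_sum (S : Finset V) (v : V) :
    inducedDegree G S v = ∑ w ∈ S, if G.Adj v w then 1 else 0 :=
  card_filter _ _

lemma twiceEdgeCount_eq_sum_inducedDegree (S : Finset V) :
    twiceEdgeCount G S = ∑ v ∈ S, inducedDegree G S v := by
  simp only [twiceEdgeCount, card_filter, sum_product, inducedDegree_eq_sum]

lemma inducedDegree_mono {A B : Finset V} (h : A ⊆ B) (v : V) :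
    inducedDegree G A v ≤ inducedDegree G B v :=
  card_le_card (filter_subset_filter _ h)

lemma twiceEdgeCount_erase {A : Finset V} {u : V} (hu : u ∈ A) :
    twiceEdgeCount G A = twiceEdgeCount G (A.erase u) + 2 * inducedDegree G A u := by
  have hback : ∑ v ∈ A.erase u, (if G.Adj v u then 1 else 0) = inducedDegree G A u := by
    rw [inducedDegree_eq_sum, ← add_sum_erase A _ hu, if_neg (G.irrefl), zero_add]
    simp only [G.adj_comm]
  simp only [twiceEdgeCount_eq_sum_inducedDegree]
  calc ∑ v ∈ A, inducedDegree G A v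
      = inducedDegree G A u + ∑ v ∈ A.erase u, inducedDegree G A v := (add_sum_erase A _ hu).symm
    _ = inducedDegree G A u + ∑ v ∈ A.erase u,
          ((if G.Adj v u then 1 else 0) + inducedDegree G (A.erase u) v) := by
        congr 1
        exact sum_congr rfl fun v _ => by
          rw [inducedDegree_eq_sum, inducedDegree_eq_sum]
          exact (add_sum_erase A (fun w => if G.Adj v w then 1 else 0) hu).symm
    _ = ∑ v ∈ A.erase u, inducedDegree G (A.erase u) v + 2 * inducedDegree G A u := by
        rw [sum_add_distrib, hback]; ring

lemma le_density_iff {S : Finset V} (hS : S.Nonempty) (c : ℝ) :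
    c ≤ density G S ↔ c * S.card ≤ twiceEdgeCount G S :=
  le_div_iff₀ (by exact_mod_cast hS.card_pos)

lemma le_density_of_forall_le_inducedDegree {S : Finset V} (hS : S.Nonempty) {c : ℝ}
    (h : ∀ v ∈ S, c ≤ inducedDegree G S v) : c ≤ density G S := by
  rw [le_density_iff G hS, twiceEdgeCount_eq_sum_inducedDegree, mul_comm]
  push_cast
  simpa using card_nsmul_le_sum S (fun v => (inducedDegree G S v : ℝ)) c h

lemma exists_subset_forall_half_le_inducedDegree {A : Finset V} (hA : A.Nonempty) {δ : ℝ}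
    (hdense : δ ≤ density G A) :
    ∃ B ⊆ A, B.Nonempty ∧ ∀ v ∈ B, δ / 2 ≤ inducedDegree G B v := by
  rw [le_density_iff G hA] at hdense
  obtain ⟨B, hBmem, hBmin⟩ := exists_min_image
    {B ∈ A.powerset | B.Nonempty ∧ δ * B.card ≤ twiceEdgeCount G B} card
    ⟨A, by simp [hA, hdense]⟩
  simp only [mem_filter, mem_powerset] at hBmem
  obtain ⟨hBA, hB, hBdense⟩ := hBmem
  refine ⟨B, hBA, hB, fun v hv => ?_⟩
  by_contra! hlow
  have hsplit : (twiceEdgeCount G B : ℝ)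
      = twiceEdgeCount G (B.erase v) + 2 * inducedDegree G B v := by
    exact_mod_cast twiceEdgeCount_erase G hv
  have hdense' : δ * (B.erase v).card < twiceEdgeCount G (B.erase v) := by
    rw [cast_card_erase_of_mem hv]
    linarith
  have hne : (B.erase v).Nonempty := by
    rw [nonempty_iff_ne_empty]
    rintro hempty
    simp [hempty, twiceEdgeCount] at hdense'
  have hle := hBmin (B.erase v)
    (by simp only [mem_filter, mem_powerset]; exact ⟨(erase_subset v B).trans hBA, hne, hdense'.le⟩)
  exact (card_erase_lt_of_mem hv).not_ge hle

lemma IsGreedyPeelingStep.exists_inducedDegree_le_density {T T' : Finset V}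
    (h : IsGreedyPeelingStep G T T') :
    ∃ v ∈ T, T' = T.erase v ∧ (inducedDegree G T v : ℝ) ≤ density G T := by
  obtain ⟨v, hv, hmin, rfl⟩ := h
  exact ⟨v, hv, rfl, le_density_of_forall_le_inducedDegree G ⟨v, hv⟩ fun u hu => by
    exact_mod_cast hmin u hu⟩

variable {G} {S : ℕ → Finset V} {m : ℕ}

lemma card_of_forall_isGreedyPeelingStep
    (hstep : ∀ j, j + 1 ≤ m → IsGreedyPeelingStep G (S j) (S (j + 1))) :
    ∀ j ≤ m, (S j).card = (S 0).card - j := by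
  intro j hj
  induction j with
  | zero => rfl
  | succ j ih =>
    obtain ⟨v, hv, -, hS⟩ := hstep j hj
    rw [hS, card_erase_of_mem hv, ih (by omega), Nat.sub_sub]

lemma subset_of_forall_isGreedyPeelingStep
    (hstep : ∀ j, j + 1 ≤ m → IsGreedyPeelingStep G (S j) (S (j + 1)))
    {c : ℝ} (hsmall : ∀ j ≤ m, density G (S j) < c)
    {B : Finset V} (hB : ∀ v ∈ B, c ≤ inducedDegree G B v) (hB0 : B ⊆ S 0) :
    ∀ j ≤ m, B ⊆ S j := by
  intro j hj
  induction j with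
  | zero => exact hB0
  | succ j ih =>
    have hBj := ih (by omega)
    obtain ⟨v, -, hS, hdeg⟩ := (hstep j hj).exists_inducedDegree_le_density
    have hvB : v ∉ B := fun hvB => by
      have hmono : (inducedDegree G B v : ℝ) ≤ inducedDegree G (S j) v := by
        exact_mod_cast inducedDegree_mono G hBj v
      linarith [hB v hvB, hsmall j (by omega)]
    rw [hS]
    exact subset_erase.mpr ⟨hBj, hvB⟩

end GreedyPeeling

theorem greedy_peeling_prune_general
    {V : Type*} [Fintype V] [DecidableEq V]
    (G : SimpleGraph V) [DecidableRel G.Adj]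
    (δ : ℝ)
    (S : ℕ → Finset V)
    (h0 : S 0 = Finset.univ)
    (hstep : ∀ j, j + 1 ≤ Fintype.card V - 1 →
      ∃ v ∈ S j,
        (∀ u ∈ S j, inducedDegree G (S j) v ≤ inducedDegree G (S j) u) ∧
        S (j + 1) = (S j).erase v)
    (hsmall : ∀ j ≤ Fintype.card V - 1, density G (S j) < δ / 2)
    (A : Finset V) (hA : A.Nonempty) :
    density G A < δ := by
  by_contra! hdense
  obtain ⟨B, -, hB, hBdeg⟩ := exists_subset_forall_half_le_inducedDegree G hA hdense
  have hsub := subset_of_forall_isGreedyPeelingStep hstep hsmall hBdeg (h0 ▸ subset_univ B) _ le_rfl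
  have hcard := card_of_forall_isGreedyPeelingStep hstep _ le_rfl
  have hlast : B = S (Fintype.card V - 1) := by
    refine eq_of_subset_of_card_le hsub ?_
    rw [hcard, h0, card_univ]
    have := hB.card_pos
    omega
  have hBdense := le_density_of_forall_le_inducedDegree G hB hBdeg
  rw [hlast] at hBdense
  linarith [hsmall _ le_rfl]

/-- Let `δ > 0` and consider the greedy peeling sequence `S 0 = V`, where each
`S (j+1)` (for `j + 1 ≤ |V| - 1`) is obtained from `S j` by removing a vertex
of minimum degree in the subgraph induced by `S j`.  If `ρ(S j) < δ/2` for
every index `j ≤ |V| - 1` of the peeling sequence, then `ρ(A) < δ` for every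
nonempty vertex subset `A`; that is, `G` contains no induced subgraph of
density at least `δ`. -/
theorem greedy_peeling_prune
    {V : Type*} [Fintype V] [DecidableEq V] [Nonempty V]
    (G : SimpleGraph V) [DecidableRel G.Adj]
    (δ : ℝ) (hδ : 0 < δ)
    (S : ℕ → Finset V)
    (h0 : S 0 = Finset.univ)
    (hstep : ∀ j, j + 1 ≤ Fintype.card V - 1 →
      ∃ v ∈ S j,
        (∀ u ∈ S j, inducedDegree G (S j) v ≤ inducedDegree G (S j) u) ∧
        S (j + 1) = (S j).erase v)
    (hsmall : ∀ j ≤ Fintype.card V - 1, density G (S j) < δ / 2)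
    (A : Finset V) (hA : A.Nonempty) :
    density G A < δ :=
  greedy_peeling_prune_general G δ S h0 hstep hsmall A hA
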